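/- For every real x ≥ 1 one has ∑_{n ≤ x} φ(⌊x/n⌋) = ∑_{n ≤ x} τ_x(n), where for a positive integer n ≤ x, τ_x(n) denotes the number of divisors d of n such that gcd(d, ⌊d·x/n⌋) = 1. -/

import Mathlib

/-!
Both sides count the pairs `(d, m)` of positive integers with `d * m ≤ x` and
`gcd(d, ⌊x / m⌋) = 1`: the left side groups them by `m` (the condition `d ≤ ⌊x / m⌋` and `φ`
counting coprime residues), the right side by `n = d * m`, using `⌊d x / n⌋ = ⌊x / m⌋`.
Since `⌊x / m⌋₊ = ⌊x⌋₊ / m`, everything reduces to an identity about `N = ⌊x⌋₊`.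
-/

open Finset

theorem Nat.totient_eq_card_filter_Icc_coprime (n : ℕ) :
    n.totient = #{d ∈ Icc 1 n | d.Coprime n} := by
  rw [← Nat.filter_coprime_Ico_eq_totient n 1, add_comm, Finset.Ico_add_one_right_eq_Icc]
  simp only [Nat.coprime_comm]

theorem Nat.floor_natCast_mul_div_of_dvd {K : Type*} [Semifield K] [LinearOrder K]
    [IsStrictOrderedRing K] [FloorSemiring K] (a : K) {d n : ℕ} (hdn : d ∣ n) (hn : n ≠ 0) :
    ⌊(d : K) * a / n⌋₊ = ⌊a⌋₊ / (n / d) := by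
  obtain ⟨m, rfl⟩ := hdn
  have hd : (d : K) ≠ 0 := by exact_mod_cast left_ne_zero_of_mul hn
  rw [Nat.mul_div_cancel_left m (Nat.pos_of_ne_zero (left_ne_zero_of_mul hn)), Nat.cast_mul,
    mul_div_mul_left a _ hd, Nat.floor_div_natCast]

theorem Finset.sum_Icc_sum_divisors_eq_sum_Icc_sum_Icc {M : Type*} [AddCommMonoid M] (N : ℕ)
    (f : ℕ → ℕ → M) :
    ∑ n ∈ Icc 1 N, ∑ d ∈ n.divisors, f d (n / d) = ∑ m ∈ Icc 1 N, ∑ d ∈ Icc 1 (N / m), f d m := by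
  rw [sum_sigma', sum_sigma']
  refine sum_bij' (fun p _ => ⟨p.1 / p.2, p.2⟩) (fun p _ => ⟨p.2 * p.1, p.2⟩) ?_ ?_ ?_ ?_ ?_
  · rintro ⟨n, d⟩ h
    simp only [mem_sigma, mem_Icc, Nat.mem_divisors] at h ⊢
    obtain ⟨⟨hn, hnN⟩, ⟨m, rfl⟩, -⟩ := h
    have hd : 0 < d := Nat.pos_of_mul_pos_right hn
    have hm : 0 < m := Nat.pos_of_mul_pos_left hn
    rw [Nat.mul_div_cancel_left m hd, Nat.le_div_iff_mul_le hm]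
    exact ⟨⟨hm, (Nat.le_mul_of_pos_left m hd).trans hnN⟩, hd, hnN⟩
  · rintro ⟨m, d⟩ h
    simp only [mem_sigma, mem_Icc, Nat.mem_divisors] at h ⊢
    obtain ⟨⟨hm, -⟩, hd, hdN⟩ := h
    rw [Nat.le_div_iff_mul_le hm] at hdN
    exact ⟨⟨Nat.mul_pos hd hm, hdN⟩, dvd_mul_right d m, (Nat.mul_pos hd hm).ne'⟩
  · rintro ⟨n, d⟩ h
    simp only [mem_sigma, Nat.mem_divisors] at h
    simp [Nat.mul_div_cancel' h.2.1]
  · rintro ⟨m, d⟩ h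
    simp only [mem_sigma, mem_Icc] at h
    simp [Nat.mul_div_cancel_left m h.2.1]
  · exact fun _ _ => rfl

theorem sum_totient_floor_div_eq_sum_taux (x : ℝ) :
    (∑ n ∈ Finset.Icc 1 ⌊x⌋₊, Nat.totient ⌊x / (n : ℝ)⌋₊) =
      ∑ n ∈ Finset.Icc 1 ⌊x⌋₊,
        (n.divisors.filter (fun d => Nat.gcd d ⌊(d : ℝ) * x / (n : ℝ)⌋₊ = 1)).card := by
  let f : ℕ → ℕ → ℕ := fun d m => if d.Coprime (⌊x⌋₊ / m) then 1 else 0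
  calc ∑ m ∈ Icc 1 ⌊x⌋₊, Nat.totient ⌊x / (m : ℝ)⌋₊
      = ∑ m ∈ Icc 1 ⌊x⌋₊, ∑ d ∈ Icc 1 (⌊x⌋₊ / m), f d m := by
        simp only [Nat.floor_div_natCast, Nat.totient_eq_card_filter_Icc_coprime, card_filter, f]
    _ = ∑ n ∈ Icc 1 ⌊x⌋₊, ∑ d ∈ n.divisors, f d (n / d) :=
        (sum_Icc_sum_divisors_eq_sum_Icc_sum_Icc _ f).symm
    _ = _ := by
        refine sum_congr rfl fun n _ => ?_
        rw [card_filter]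
        refine sum_congr rfl fun d hd => ?_
        obtain ⟨hdn, hn⟩ := Nat.mem_divisors.1 hd
        rw [Nat.floor_natCast_mul_div_of_dvd x hdn hn]
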